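/- For μ ∈ {1,-1}, real α, real ω ≠ α, and odd size k = 2s - 1, the Hermitian matrix L = μ((α-ω)F_k + G_k) has inertia p₊(L) = s - 1 + (1 + μ·sign(α-ω))/2 and p₋(L) = s - 1 + (1 - μ·sign(α-ω))/2. -/

import Mathlib

/-!
The first `s - 1` coordinate vectors span a subspace on which the quadratic form of
`L = μ((α - ω)F + G)` vanishes, because `F` and `G` are supported on and just above the
antidiagonal. By Sylvester's law of inertia this caps both `p₊(L)` and `p₋(L)` at `s`. Reversing
the rows of `(α - ω)F + G` gives a lower triangular matrix with diagonal `α - ω`, so `L` is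
nonsingular, `p₊ + p₋ = 2s - 1`, and `{p₊, p₋} = {s - 1, s}`; which one is which is decided by the
sign of `det L = (-1)^(s-1) (μ(α - ω))^(2s-1)`, since that sign is `(-1)^p₋`.
-/

open Matrix QuadraticMap QuadraticForm

/-- The k×k anti-identity over ℝ (1-based: ones where i+j = k+1). -/
def FmatR (k : ℕ) : Matrix (Fin k) (Fin k) ℝ :=
  Matrix.of fun i j => if (i : ℕ) + (j : ℕ) + 1 = k then 1 else 0

/-- The k×k shifted anti-identity over ℝ (1-based: ones where i+j = k). -/
def GmatR (k : ℕ) : Matrix (Fin k) (Fin k) ℝ :=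
  Matrix.of fun i j => if (i : ℕ) + (j : ℕ) + 2 = k then 1 else 0

lemma Real.sign_pow_of_odd {n : ℕ} (hn : Odd n) (x : ℝ) : Real.sign (x ^ n) = Real.sign x := by
  rcases lt_trichotomy x 0 with hx | rfl | hx
  · rw [Real.sign_of_neg (hn.pow_neg hx), Real.sign_of_neg hx]
  · rw [zero_pow hn.pos.ne']
  · rw [Real.sign_of_pos (pow_pos hx n), Real.sign_of_pos hx]

lemma Fin.ncard_setOf_val_lt {k t : ℕ} (h : t ≤ k) : {i : Fin k | (i : ℕ) < t}.ncard = t := by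
  rw [Set.ncard_eq_toFinset_card', Set.toFinset_ofPred, Fin.card_filter_val_lt, min_eq_right h]

section Inertia

variable {n : Type*} [Fintype n] [DecidableEq n]

lemma Matrix.toQuadraticForm'_apply {R : Type*} [CommRing R] (A : Matrix n n R) (x : n → R) :
    A.toQuadraticForm' x = x ⬝ᵥ A *ᵥ x := by
  simp [toQuadraticForm', toLinearMap₂'_apply']

lemma Matrix.toQuadraticForm'_eq_zero_of_mem_spanSubset {R : Type*} [CommRing R]
    {A : Matrix n n R} {s : Set n} (hA : ∀ i ∈ s, ∀ j ∈ s, A i j = 0) {x : n → R}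
    (hx : x ∈ Pi.spanSubset R s) : A.toQuadraticForm' x = 0 := by
  rw [Pi.mem_spanSubset_iff] at hx
  simp only [toQuadraticForm'_apply, dotProduct, mulVec, Finset.mul_sum]
  refine Finset.sum_eq_zero fun i _ => Finset.sum_eq_zero fun j _ => ?_
  by_cases hi : i ∈ s
  · by_cases hj : j ∈ s
    · simp [hA i hi j hj]
    · simp [hx j hj]
  · simp [hx i hi]

namespace Matrix.IsHermitian

variable {A : Matrix n n ℝ} (hA : A.IsHermitian)
include hA

lemma toQuadraticForm'_comp_eigenvectorUnitary :
    A.toQuadraticForm'.comp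
        (UnitaryGroup.toLinearEquiv hA.eigenvectorUnitary : (n → ℝ) →ₗ[ℝ] n → ℝ)
      = weightedSumSquares ℝ hA.eigenvalues := by
  ext y
  set U : Matrix n n ℝ := (hA.eigenvectorUnitary : Matrix n n ℝ)
  have hdiag : Uᵀ * A * U = diagonal hA.eigenvalues := by
    simpa [Unitary.conjStarAlgAut_star_apply, star_eq_conjTranspose,
      conjTranspose_eq_transpose_of_trivial] using hA.conjStarAlgAut_star_eigenvectorUnitary
  rw [QuadraticMap.comp_apply, toQuadraticForm'_apply, weightedSumSquares_apply]
  calc (U *ᵥ y) ⬝ᵥ A *ᵥ (U *ᵥ y) = y ⬝ᵥ (Uᵀ * A * U) *ᵥ y := by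
        rw [← mulVec_mulVec, ← mulVec_mulVec, dotProduct_mulVec y, vecMul_transpose]
    _ = ∑ i, hA.eigenvalues i • (y i * y i) := by
        simp only [hdiag, dotProduct, mulVec_diagonal, smul_eq_mul]
        exact Finset.sum_congr rfl fun i _ => by ring

lemma equivalent_weightedSumSquares :
    A.toQuadraticForm'.Equivalent (weightedSumSquares ℝ hA.eigenvalues) :=
  ⟨hA.toQuadraticForm'_comp_eigenvectorUnitary ▸
    isometryEquivOfCompLinearEquiv _ (UnitaryGroup.toLinearEquiv hA.eigenvectorUnitary)⟩

lemma sigPos_toQuadraticForm' :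
    sigPos A.toQuadraticForm' = Fintype.card {i // 0 < hA.eigenvalues i} := by
  rw [sigPos_of_equiv_weightedSumSquares hA.equivalent_weightedSumSquares, ← Nat.card_coe_set_eq,
    Nat.card_eq_fintype_card]
  rfl

lemma sigNeg_toQuadraticForm' :
    sigNeg A.toQuadraticForm' = Fintype.card {i // hA.eigenvalues i < 0} := by
  rw [sigNeg_of_equiv_weightedSumSquares hA.equivalent_weightedSumSquares, ← Nat.card_coe_set_eq,
    Nat.card_eq_fintype_card]
  rfl

lemma card_pos_add_ncard_le {s : Set n} (hs : ∀ i ∈ s, ∀ j ∈ s, A i j = 0) :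
    Fintype.card {i // 0 < hA.eigenvalues i} + s.ncard ≤ Fintype.card n := by
  rw [← hA.sigPos_toQuadraticForm', ← Pi.dim_spanSubset (R := ℝ),
    ← Module.finrank_fintype_fun_eq_card ℝ]
  exact sigPos_add_finrank_le_of_nonpos fun x hx =>
    (toQuadraticForm'_eq_zero_of_mem_spanSubset hs hx).le

lemma card_neg_add_ncard_le {s : Set n} (hs : ∀ i ∈ s, ∀ j ∈ s, A i j = 0) :
    Fintype.card {i // hA.eigenvalues i < 0} + s.ncard ≤ Fintype.card n := by
  rw [← hA.sigNeg_toQuadraticForm', ← sigPos_neg, ← Pi.dim_spanSubset (R := ℝ),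
    ← Module.finrank_fintype_fun_eq_card ℝ]
  exact sigPos_add_finrank_le_of_nonpos fun x hx => by
    simp [toQuadraticForm'_eq_zero_of_mem_spanSubset hs hx]

lemma eigenvalues_ne_zero (hdet : A.det ≠ 0) (i : n) : hA.eigenvalues i ≠ 0 := by
  rw [hA.det_eq_prod_eigenvalues] at hdet
  exact fun h => hdet (Finset.prod_eq_zero (Finset.mem_univ i) (by simp [h]))

lemma card_pos_add_card_neg (hdet : A.det ≠ 0) :
    Fintype.card {i // 0 < hA.eigenvalues i} + Fintype.card {i // hA.eigenvalues i < 0}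
      = Fintype.card n := by
  rw [← Fintype.card_subtype_or_disjoint _ _ (fun p q h i hi => lt_asymm (q i hi) (h i hi))]
  exact Fintype.card_congr
    (Equiv.subtypeUnivEquiv fun i => (hA.eigenvalues_ne_zero hdet i).lt_or_gt.symm)

lemma neg_one_pow_card_neg_mul_det_pos (hdet : A.det ≠ 0) :
    0 < (-1 : ℝ) ^ Fintype.card {i // hA.eigenvalues i < 0} * A.det := by
  classical
  have hsign : (-1 : ℝ) ^ Fintype.card {i // hA.eigenvalues i < 0}
      = ∏ i, if hA.eigenvalues i < 0 then -1 else 1 := by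
    rw [Finset.prod_ite, Finset.prod_const, Finset.prod_const, one_pow, mul_one,
      Fintype.card_subtype]
  rw [hsign, hA.det_eq_prod_eigenvalues, ← Finset.prod_mul_distrib]
  refine Finset.prod_pos fun i _ => ?_
  split_ifs with h
  · simpa using h
  · simpa using (not_lt.1 h).lt_of_ne' (hA.eigenvalues_ne_zero hdet i)

theorem inertia_of_isotropic {t : ℕ} (hn : Fintype.card n = 2 * t + 1) {s : Set n}
    (hst : s.ncard = t) (hs : ∀ i ∈ s, ∀ j ∈ s, A i j = 0) (hdet : A.det ≠ 0) :
    (Fintype.card {i // 0 < hA.eigenvalues i} : ℝ)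
        = t + (1 + Real.sign ((-1) ^ t * A.det)) / 2 ∧
      (Fintype.card {i // hA.eigenvalues i < 0} : ℝ)
        = t + (1 - Real.sign ((-1) ^ t * A.det)) / 2 := by
  have hP := hA.card_pos_add_ncard_le hs
  have hN := hA.card_neg_add_ncard_le hs
  have hPN := hA.card_pos_add_card_neg hdet
  have hpar := hA.neg_one_pow_card_neg_mul_det_pos hdet
  obtain hNt | hNt : Fintype.card {i // hA.eigenvalues i < 0} = t ∨
      Fintype.card {i // hA.eigenvalues i < 0} = t + 1 := by omega
  · rw [hNt] at hpar
    rw [Real.sign_of_pos hpar, hNt, show Fintype.card {i // 0 < hA.eigenvalues i} = t + 1 by omega]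
    constructor <;> push_cast <;> ring
  · rw [hNt, pow_succ, mul_comm _ (-1 : ℝ), mul_assoc, neg_one_mul, neg_pos] at hpar
    rw [Real.sign_of_neg hpar, hNt, show Fintype.card {i // 0 < hA.eigenvalues i} = t by omega]
    constructor <;> push_cast <;> ring

end Matrix.IsHermitian

end Inertia

lemma FmatR_eq_submatrix_one (k : ℕ) :
    FmatR k = (1 : Matrix (Fin k) (Fin k) ℝ).submatrix Fin.revPerm id := by
  ext i j
  simp only [FmatR, of_apply, submatrix_apply, id, one_apply, Fin.revPerm_apply, Fin.ext_iff,
    Fin.val_rev]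
  congr 1
  simp only [eq_iff_iff]
  omega

lemma det_FmatR_succ (k : ℕ) : (FmatR (k + 1)).det = (-1) ^ k * (FmatR k).det := by
  rw [det_succ_row_zero, Finset.sum_eq_single (Fin.last k)]
  · have hminor : (FmatR (k + 1)).submatrix Fin.succ (Fin.last k).succAbove = FmatR k := by
      ext i j
      simp only [FmatR, submatrix_apply, of_apply, Fin.succAbove_last, Fin.val_succ,
        Fin.val_castSucc]
      congr 1
      simp only [eq_iff_iff]
      omega
    rw [hminor]
    simp [FmatR]
  · intro j _ hj
    simp only [FmatR, of_apply, Fin.val_zero, zero_add]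
    rw [if_neg (fun h => hj (Fin.ext (by simp; omega)))]
    ring
  · simp

lemma det_FmatR_odd (t : ℕ) : (FmatR (2 * t + 1)).det = (-1) ^ t := by
  induction t with
  | zero => simp [FmatR]
  | succ t ih =>
    rw [show 2 * (t + 1) + 1 = 2 * t + 1 + 1 + 1 by ring, det_FmatR_succ, det_FmatR_succ, ih]
    simp [pow_succ, pow_mul]

lemma smul_FmatR_add_GmatR_rev_apply (k : ℕ) (a : ℝ) (i j : Fin k) :
    (a • FmatR k + GmatR k) (Fin.rev i) j
      = if j = i then a else if (i : ℕ) = j + 1 then 1 else 0 := by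
  simp only [FmatR, GmatR, Matrix.add_apply, Matrix.smul_apply, of_apply, Fin.val_rev, Fin.ext_iff,
    smul_eq_mul]
  have := i.isLt
  split_ifs <;> first | omega | ring

lemma det_smul_FmatR_add_GmatR (k : ℕ) (a : ℝ) :
    (a • FmatR k + GmatR k).det = (FmatR k).det * a ^ k := by
  have hrev : ((a • FmatR k + GmatR k).submatrix Fin.revPerm id).det = a ^ k := by
    rw [det_of_isLowerTriangular]
    · simp only [submatrix_apply, Fin.revPerm_apply, id, smul_FmatR_add_GmatR_rev_apply, if_true]
      simp
    · intro i j hij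
      have hij : (i : ℕ) < j := hij
      simp only [submatrix_apply, Fin.revPerm_apply, id, smul_FmatR_add_GmatR_rev_apply,
        Fin.ext_iff]
      split_ifs <;> first | rfl | omega
  have hsign : ((Equiv.Perm.sign (Fin.revPerm (n := k)) : ℤ) : ℝ) ^ 2 = 1 := by
    rcases Int.units_eq_one_or (Equiv.Perm.sign (Fin.revPerm (n := k))) with h | h <;> simp [h]
  have hF : (FmatR k).det = Equiv.Perm.sign (Fin.revPerm (n := k)) := by
    rw [FmatR_eq_submatrix_one, det_permute, det_one, mul_one]
  rw [det_permute] at hrev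
  rw [hF, ← hrev, ← mul_assoc, ← pow_two, hsign, one_mul]

lemma neg_one_pow_mul_det_smul_FmatR_add_GmatR {k t : ℕ} (hk : k = 2 * t + 1) (μ a : ℝ) :
    (-1) ^ t * (μ • (a • FmatR k + GmatR k)).det = (μ * a) ^ k := by
  subst hk
  have hsq : ((-1 : ℝ) ^ t) ^ 2 = 1 := by rw [← pow_mul, pow_mul']; simp
  rw [det_smul, det_smul_FmatR_add_GmatR, det_FmatR_odd, Fintype.card_fin, mul_pow]
  linear_combination (μ ^ (2 * t + 1) * a ^ (2 * t + 1)) * hsq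

lemma smul_FmatR_add_GmatR_apply_eq_zero {k : ℕ} (μ a : ℝ) {i j : Fin k}
    (h : (i : ℕ) + j + 2 < k) : (μ • (a • FmatR k + GmatR k)) i j = 0 := by
  simp only [FmatR, GmatR, Matrix.smul_apply, Matrix.add_apply, of_apply, smul_eq_mul]
  rw [if_neg (by omega), if_neg (by omega)]
  ring

/-- For μ ∈ {1,-1}, real α, real ω ≠ α, and odd size k = 2s-1, the
Hermitian matrix L = μ((α-ω)F_k + G_k) has inertia
p₊(L) = s - 1 + (1 + μ·sign(α-ω))/2 and p₋(L) = s - 1 + (1 - μ·sign(α-ω))/2. -/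
theorem stmt11 (s : ℕ) (hs : 1 ≤ s) (μ α ω : ℝ) (hμ : μ = 1 ∨ μ = -1) (hω : ω ≠ α)
    (L : Matrix (Fin (2 * s - 1)) (Fin (2 * s - 1)) ℝ)
    (hLdef : L = μ • ((α - ω) • FmatR (2 * s - 1) + GmatR (2 * s - 1)))
    (hL : L.IsHermitian) :
    (Fintype.card {i // 0 < hL.eigenvalues i} : ℝ)
        = (s : ℝ) - 1 + (1 + μ * Real.sign (α - ω)) / 2 ∧
      (Fintype.card {i // hL.eigenvalues i < 0} : ℝ)
        = (s : ℝ) - 1 + (1 - μ * Real.sign (α - ω)) / 2 := by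
  obtain ⟨t, rfl⟩ : ∃ t, s = t + 1 := ⟨s - 1, by omega⟩
  have hk : 2 * (t + 1) - 1 = 2 * t + 1 := by omega
  have hdet : (-1) ^ t * L.det = (μ * (α - ω)) ^ (2 * t + 1) := by
    rw [hLdef, neg_one_pow_mul_det_smul_FmatR_add_GmatR hk, hk]
  have hμa : μ * (α - ω) ≠ 0 :=
    mul_ne_zero (by rcases hμ with rfl | rfl <;> norm_num) (sub_ne_zero.2 hω.symm)
  have hdet0 : L.det ≠ 0 := fun h => pow_ne_zero _ hμa (by rw [← hdet, h, mul_zero])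
  have hsign : Real.sign ((-1) ^ t * L.det) = μ * Real.sign (α - ω) := by
    rw [hdet, Real.sign_pow_of_odd ⟨t, rfl⟩]
    rcases hμ with rfl | rfl <;> simp only [one_mul, neg_one_mul, Real.sign_neg]
  have hblock : ∀ i ∈ {i : Fin (2 * (t + 1) - 1) | (i : ℕ) < t}, ∀ j ∈ {j : Fin _ | (j : ℕ) < t},
      L i j = 0 := fun i hi j hj => hLdef ▸
    smul_FmatR_add_GmatR_apply_eq_zero _ _ (by simp only [Set.mem_ofPred_eq] at hi hj; omega)
  obtain ⟨hP, hN⟩ := hL.inertia_of_isotropic (by simp [hk])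
    (Fin.ncard_setOf_val_lt (by omega)) hblock hdet0
  rw [hsign] at hP hN
  push_cast [hP, hN]
  constructor <;> ring
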